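/- arXiv:1109.5812 — 2 statements merged into one kernel-verified Lean document; each statement's English description precedes it below -/
import Mathlib

section
/- Let Z₁,…,Zₙ be independent nonnegative random variables with μ = ∑ E Z_i and σ² = ∑ E Z_i² < ∞. Then for every 0 < x < μ, P(∑ Z_i ≤ x) ≤ exp(−(μ−x)²/(2σ²)). -/
open Real MeasureTheory ProbabilityTheory

/-! For `t ≤ 0` and `Z ≥ 0` we have `exp (t Z) ≤ 1 + t Z + t² Z² / 2`, so
`E exp (t Z_i) ≤ exp (t E Z_i + t² E Z_i² / 2)`. By independence the moment generating function
of `S = ∑ Z_i` is at most `exp (t μ + t² σ² / 2)` on `t ≤ 0`, and Chernoff's bound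
`P(S ≤ x) ≤ exp (-t x) E exp (t S)` at `t = -(μ - x) / σ²` gives the claim. -/

theorem Real.exp_le_one_add_add_sq_div_two_of_nonpos {u : ℝ} (hu : u ≤ 0) :
    exp u ≤ 1 + u + u ^ 2 / 2 := by
  -- `(1 + u + u²/2) (1 - u + u²/2) = 1 + u⁴/4 ≥ 1`, while `exp u * exp (-u) = 1`.
  have hneg := quadratic_le_exp_of_nonneg (neg_nonneg.2 hu)
  have hprod : exp u * exp (-u) = 1 := by rw [← exp_add, add_neg_cancel, exp_zero]
  nlinarith [exp_pos u, sq_nonneg (u ^ 2), mul_le_mul_of_nonneg_left hneg (exp_pos u).le]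

namespace ProbabilityTheory

variable {Ω : Type*} [MeasurableSpace Ω] {μ : Measure Ω} {X : Ω → ℝ} {t : ℝ}

lemma integrable_exp_mul_of_nonpos_of_nonneg [IsFiniteMeasure μ] (hX : AEMeasurable X μ)
    (hX0 : ∀ᵐ ω ∂μ, 0 ≤ X ω) (ht : t ≤ 0) : Integrable (fun ω => exp (t * X ω)) μ := by
  refine (integrable_const 1).mono' (by fun_prop) ?_
  filter_upwards [hX0] with ω hω
  rw [norm_of_nonneg (exp_pos _).le, exp_le_one_iff]
  exact mul_nonpos_of_nonpos_of_nonneg ht hω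

lemma mgf_le_exp_of_nonneg_of_nonpos [IsProbabilityMeasure μ] (hX0 : ∀ᵐ ω ∂μ, 0 ≤ X ω)
    (hX : Integrable X μ) (hX2 : Integrable (fun ω => X ω ^ 2) μ) (ht : t ≤ 0) :
    mgf X μ t ≤ exp (t * ∫ ω, X ω ∂μ + t ^ 2 * (∫ ω, X ω ^ 2 ∂μ) / 2) := by
  have hlin : Integrable (fun ω => 1 + t * X ω) μ := (integrable_const 1).add (hX.const_mul t)
  have hquad : Integrable (fun ω => 1 + t * X ω + t ^ 2 / 2 * X ω ^ 2) μ :=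
    hlin.add (hX2.const_mul _)
  calc mgf X μ t ≤ ∫ ω, 1 + t * X ω + t ^ 2 / 2 * X ω ^ 2 ∂μ := by
        refine integral_mono_ae
          (integrable_exp_mul_of_nonpos_of_nonneg hX.aemeasurable hX0 ht) hquad ?_
        filter_upwards [hX0] with ω hω
        refine (exp_le_one_add_add_sq_div_two_of_nonpos
          (mul_nonpos_of_nonpos_of_nonneg ht hω)).trans_eq ?_
        ring
    _ = 1 + (t * ∫ ω, X ω ∂μ + t ^ 2 * (∫ ω, X ω ^ 2 ∂μ) / 2) := by
        rw [integral_add hlin (hX2.const_mul _), integral_add (integrable_const 1) (hX.const_mul t),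
          integral_const, integral_const_mul, integral_const_mul]
        simp only [probReal_univ, smul_eq_mul, one_mul]
        ring
    _ ≤ _ := by linarith [add_one_le_exp (t * ∫ ω, X ω ∂μ + t ^ 2 * (∫ ω, X ω ^ 2 ∂μ) / 2)]

lemma iIndepFun.mgf_sum_le_exp_of_nonneg_of_nonpos {ι : Type*} {Z : ι → Ω → ℝ}
    [IsProbabilityMeasure μ] (hindep : iIndepFun Z μ) (hZ0 : ∀ i, ∀ᵐ ω ∂μ, 0 ≤ Z i ω)
    (hZ : ∀ i, Integrable (Z i) μ) (hZ2 : ∀ i, Integrable (fun ω => Z i ω ^ 2) μ)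
    (s : Finset ι) (ht : t ≤ 0) :
    mgf (∑ i ∈ s, Z i) μ t ≤
      exp (t * ∑ i ∈ s, ∫ ω, Z i ω ∂μ + t ^ 2 * (∑ i ∈ s, ∫ ω, Z i ω ^ 2 ∂μ) / 2) := by
  rw [hindep.mgf_sum₀ (fun i => (hZ i).aemeasurable), Finset.mul_sum, Finset.mul_sum,
    Finset.sum_div, ← Finset.sum_add_distrib, exp_sum]
  exact Finset.prod_le_prod (fun i _ => mgf_nonneg)
    (fun i _ => mgf_le_exp_of_nonneg_of_nonpos (hZ0 i) (hZ i) (hZ2 i) ht)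

lemma measure_le_le_exp_neg_sq_of_mgf_le [IsFiniteMeasure μ] {m v x : ℝ} (hv : 0 ≤ v)
    (hxm : x ≤ m) (h_int : ∀ t ≤ 0, Integrable (fun ω => exp (t * X ω)) μ)
    (h_mgf : ∀ t ≤ 0, mgf X μ t ≤ exp (t * m + t ^ 2 * v / 2)) :
    μ.real {ω | X ω ≤ x} ≤ exp (-(m - x) ^ 2 / (2 * v)) := by
  set t := -(m - x) / v
  have ht : t ≤ 0 := div_nonpos_of_nonpos_of_nonneg (by linarith) hv
  calc μ.real {ω | X ω ≤ x} ≤ exp (-t * x) * mgf X μ t :=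
        measure_le_le_exp_mul_mgf x ht (h_int t ht)
    _ ≤ exp (-t * x) * exp (t * m + t ^ 2 * v / 2) := by gcongr; exact h_mgf t ht
    _ = exp (-(m - x) ^ 2 / (2 * v)) := by
        rw [← exp_add]
        congr 1
        -- for `v = 0` both exponents are `0`, because `a / 0 = 0`
        rcases hv.eq_or_lt with rfl | hv
        · simp [t]
        · simp only [t]; field_simp; ring

end ProbabilityTheory

theorem stmt_4_general {Ω : Type*} [MeasureSpace Ω] [IsProbabilityMeasure (ℙ : Measure Ω)]
    {n : ℕ} (Z : Fin n → Ω → ℝ)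
    (hindep : iIndepFun Z ℙ)
    (hpos : ∀ i, ∀ ω, 0 ≤ Z i ω)
    (hint1 : ∀ i, Integrable (Z i) ℙ)
    (hint2 : ∀ i, Integrable (fun ω => (Z i ω) ^ 2) ℙ)
    (μ σ2 : ℝ) (hμ : μ = ∑ i, ∫ ω, Z i ω) (hσ : σ2 = ∑ i, ∫ ω, (Z i ω) ^ 2)
    (x : ℝ) (hxμ : x < μ) :
    (ℙ {ω | ∑ i, Z i ω ≤ x}).toReal ≤ Real.exp (-(μ - x) ^ 2 / (2 * σ2)) := by
  have hZ0 : ∀ i, ∀ᵐ ω ∂ℙ, 0 ≤ Z i ω := fun i => .of_forall (hpos i)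
  have hσ2 : 0 ≤ σ2 := hσ ▸ Finset.sum_nonneg fun i _ => integral_nonneg fun ω => sq_nonneg _
  have hsum : ∀ ω, ∑ i, Z i ω = (∑ i, Z i) ω := fun ω => (Finset.sum_apply ω _ Z).symm
  simp only [hsum]
  refine measure_le_le_exp_neg_sq_of_mgf_le hσ2 hxμ.le (fun t ht => ?_) (fun t ht => ?_)
  · refine integrable_exp_mul_of_nonpos_of_nonneg (by fun_prop) (.of_forall fun ω => ?_) ht
    rw [← hsum]
    exact Finset.sum_nonneg fun i _ => hpos i ω
  · rw [hμ, hσ]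
    exact hindep.mgf_sum_le_exp_of_nonneg_of_nonpos hZ0 hint1 hint2 _ ht

theorem stmt_4 {Ω : Type*} [MeasureSpace Ω] [IsProbabilityMeasure (ℙ : Measure Ω)]
    {n : ℕ} (Z : Fin n → Ω → ℝ)
    (hmeas : ∀ i, Measurable (Z i))
    (hindep : iIndepFun Z ℙ)
    (hpos : ∀ i, ∀ ω, 0 ≤ Z i ω)
    (hint1 : ∀ i, Integrable (Z i) ℙ)
    (hint2 : ∀ i, Integrable (fun ω => (Z i ω) ^ 2) ℙ)
    (μ σ2 : ℝ) (hμ : μ = ∑ i, ∫ ω, Z i ω) (hσ : σ2 = ∑ i, ∫ ω, (Z i ω) ^ 2)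
    (x : ℝ) (hx0 : 0 < x) (hxμ : x < μ) :
    (ℙ {ω | ∑ i, Z i ω ≤ x}).toReal ≤ Real.exp (-(μ - x) ^ 2 / (2 * σ2)) :=
  stmt_4_general Z hindep hpos hint1 hint2 μ σ2 hμ hσ x hxμ
end

section
/- Let Y₁, Y₂, … be i.i.d. with E Y₁² = 1 and E|Y₁|^p < ∞ for some p ∈ (2,3]. Set Vₙ² = ∑_{k=1}^n Y_k². Then n · E[(Y₁²/Vₙ²)^{p/2}] ≥ (1 + o(1)) E|Y₁|^p · n^{1−p/2} as n → ∞; more precisely, liminf_{n→∞} n^{p/2} E[(Y₁²/Vₙ²)^{p/2}] ≥ E|Y₁|^p. -/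
/-!
Write `X k = Y k ^ 2` and `r = p / 2`. By the strong law of large numbers
`(∑_{k<n} X k) / n → 1` almost surely, so `n ^ r (X 0 / ∑_{k<n} X k) ^ r → X 0 ^ r = |Y 0| ^ p`
almost surely, and Fatou's lemma gives the bound once the expectations are known to be bounded
(without that, the real `liminf` is a junk value). For boundedness, the integrand is at most
`2 ^ r X 0 ^ r` when `∑_{1≤k<n} X k > n / 2` and at most `n ^ r` otherwise; the bound
`E exp (-u X 0) ≤ 1 - u + u ^ r E X 0 ^ r ≤ exp (-3u/4)` for small `u > 0` and a Chernoff bound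
make the probability of the second event `O(exp (-u n / 4))`.
-/

open Real MeasureTheory ProbabilityTheory Filter Topology Finset

lemma exp_neg_le_one_sub_add_rpow {r t : ℝ} (hr1 : 1 ≤ r) (hr2 : r ≤ 2) (ht : 0 ≤ t) :
    exp (-t) ≤ 1 - t + t ^ r := by
  rcases le_or_gt t 1 with ht1 | ht1
  · have hinv : exp (-t) ≤ (1 + t)⁻¹ := by
      rw [exp_neg]
      exact inv_anti₀ (by linarith) (by linarith [add_one_le_exp t])
    have hquad : (1 + t)⁻¹ ≤ 1 - t + t ^ (2 : ℝ) := by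
      rw [rpow_two, inv_le_iff_one_le_mul₀' (by linarith)]
      nlinarith [sq_nonneg t, mul_nonneg ht (sq_nonneg t)]
    linarith [rpow_le_rpow_of_exponent_ge' ht ht1 (by linarith) hr2]
  · have hexp : exp (-t) ≤ 1 := exp_le_one_iff.mpr (by linarith)
    linarith [self_le_rpow_of_one_le ht1.le hr1]

lemma sq_rpow_div_two (y p : ℝ) : (y ^ 2) ^ (p / 2) = |y| ^ p := by
  rw [← sq_abs, ← rpow_natCast, ← rpow_mul (abs_nonneg y)]
  ring_nf

lemma rpow_mul_rpow_div_le {n a S T r : ℝ} (hn : 0 < n) (ha : 0 ≤ a) (haS : a ≤ S)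
    (hTS : T ≤ S) (hr : 0 ≤ r) :
    n ^ r * (a / S) ^ r ≤ (if T ≤ n / 2 then n ^ r else 0) + 2 ^ r * a ^ r := by
  have hS : 0 ≤ S := ha.trans haS
  split_ifs with hT
  · have hle : (a / S) ^ r ≤ 1 := rpow_le_one (div_nonneg ha hS) (div_le_one_of_le₀ haS hS) hr
    nlinarith [rpow_nonneg hn.le r, rpow_nonneg (zero_le_two (α := ℝ)) r, rpow_nonneg ha r]
  · calc n ^ r * (a / S) ^ r = (n * (a / S)) ^ r := (mul_rpow hn.le (div_nonneg ha hS)).symm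
      _ ≤ (2 * a) ^ r := by
        refine rpow_le_rpow (by positivity) ?_ hr
        rw [mul_div_assoc', div_le_iff₀ (by linarith)]
        nlinarith
      _ = 0 + 2 ^ r * a ^ r := by rw [zero_add, mul_rpow zero_le_two ha]

theorem MeasureTheory.integral_le_liminf_integral_of_ae_tendsto {α : Type*}
    {mα : MeasurableSpace α} {μ : Measure α} {f : ℕ → α → ℝ} {g : α → ℝ}
    (hf_nonneg : ∀ n, 0 ≤ᵐ[μ] f n) (hf_int : ∀ n, Integrable (f n) μ)
    (hfg : ∀ᵐ x ∂μ, Tendsto (fun n ↦ f n x) atTop (𝓝 (g x)))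
    (hbdd : IsBoundedUnder (· ≤ ·) atTop fun n ↦ ∫ x, f n x ∂μ) :
    ∫ x, g x ∂μ ≤ liminf (fun n ↦ ∫ x, f n x ∂μ) atTop := by
  obtain ⟨B, hB⟩ := hbdd
  have hbound : ∀ᶠ n in atTop, ENNReal.ofReal (∫ x, f n x ∂μ) ≤ ENNReal.ofReal B :=
    (eventually_map.mp hB).mono fun n hn ↦ ENNReal.ofReal_le_ofReal hn
  have hg_nonneg : 0 ≤ᵐ[μ] g := by
    filter_upwards [hfg, ae_all_iff.mpr hf_nonneg] with x hx hx0 using ge_of_tendsto' hx hx0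
  have hlintegral : ∫⁻ x, ENNReal.ofReal (g x) ∂μ
      ≤ liminf (fun n ↦ ENNReal.ofReal (∫ x, f n x ∂μ)) atTop := calc
    ∫⁻ x, ENNReal.ofReal (g x) ∂μ
        = ∫⁻ x, liminf (fun n ↦ ENNReal.ofReal (f n x)) atTop ∂μ := by
      refine lintegral_congr_ae ?_
      filter_upwards [hfg] with x hx
      exact ((ENNReal.continuous_ofReal.tendsto _).comp hx).liminf_eq.symm
    _ ≤ liminf (fun n ↦ ∫⁻ x, ENNReal.ofReal (f n x) ∂μ) atTop :=
      lintegral_liminf_le' fun n ↦ (hf_int n).aemeasurable.ennreal_ofReal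
    _ = liminf (fun n ↦ ENNReal.ofReal (∫ x, f n x ∂μ)) atTop := by
      simp_rw [ofReal_integral_eq_lintegral_ofReal (hf_int _) (hf_nonneg _)]
  calc ∫ x, g x ∂μ = (∫⁻ x, ENNReal.ofReal (g x) ∂μ).toReal :=
        integral_eq_lintegral_of_nonneg_ae hg_nonneg
          (aestronglyMeasurable_of_tendsto_ae _ (fun n ↦ (hf_int n).1) hfg)
    _ ≤ (liminf (fun n ↦ ENNReal.ofReal (∫ x, f n x ∂μ)) atTop).toReal :=
        ENNReal.toReal_mono (ne_top_of_le_ne_top ENNReal.ofReal_ne_top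
          (liminf_le_of_frequently_le' hbound.frequently)) hlintegral
    _ = liminf (fun n ↦ ∫ x, f n x ∂μ) atTop := by
        rw [← ENNReal.liminf_toReal_eq ENNReal.ofReal_ne_top hbound]
        simp_rw [ENNReal.toReal_ofReal (integral_nonneg_of_ae (hf_nonneg _))]

section

variable {Ω : Type*} {mΩ : MeasurableSpace Ω} {μ : Measure Ω}

lemma integrable_exp_neg_mul_of_nonneg [IsFiniteMeasure μ] {X : Ω → ℝ} (hXm : Measurable X)
    (hX : 0 ≤ X) {u : ℝ} (hu : 0 ≤ u) : Integrable (fun ω ↦ exp (-u * X ω)) μ := by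
  refine Integrable.mono' (integrable_const 1) (hXm.const_mul _).exp.aestronglyMeasurable
    (ae_of_all _ fun ω ↦ ?_)
  rw [norm_of_nonneg (exp_nonneg _), exp_le_one_iff]
  nlinarith [mul_nonneg hu (hX ω)]

lemma ae_tendsto_rpow_mul_self_div_sum_range {X : ℕ → Ω → ℝ}
    (hindep : Pairwise (Function.onFun (IndepFun · · μ) X))
    (hident : ∀ i, IdentDistrib (X i) (X 0) μ μ) (hX : ∀ i, 0 ≤ X i) (hXi : Integrable (X 0) μ)
    (hmean : μ[X 0] = 1) {r : ℝ} (hr : 0 ≤ r) :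
    ∀ᵐ ω ∂μ, Tendsto (fun n : ℕ ↦ (n : ℝ) ^ r * (X 0 ω / ∑ i ∈ range n, X i ω) ^ r) atTop
      (𝓝 (X 0 ω ^ r)) := by
  filter_upwards [strong_law_ae_real X hXi hindep hident] with ω hω
  rw [hmean] at hω
  have hratio : Tendsto (fun n : ℕ ↦ X 0 ω * (n / ∑ i ∈ range n, X i ω)) atTop (𝓝 (X 0 ω)) := by
    simpa using (hω.inv₀ one_ne_zero).const_mul (X 0 ω)
  refine (hratio.rpow_const (Or.inr hr)).congr fun n ↦ ?_
  rw [← mul_rpow (Nat.cast_nonneg n) (div_nonneg (hX 0 ω) (sum_nonneg fun i _ ↦ hX i ω)),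
    mul_div_left_comm]

variable [IsProbabilityMeasure μ]

lemma mgf_neg_le_one_sub_add_rpow {X : Ω → ℝ} (hXm : Measurable X) (hX : 0 ≤ X)
    (hXi : Integrable X μ) {r : ℝ} (hr1 : 1 ≤ r) (hr2 : r ≤ 2)
    (hXr : Integrable (fun ω ↦ X ω ^ r) μ) {u : ℝ} (hu : 0 ≤ u) :
    mgf X μ (-u) ≤ 1 - u * μ[X] + u ^ r * μ[fun ω ↦ X ω ^ r] := by
  have hbound : Integrable (fun ω ↦ 1 - u * X ω + u ^ r * X ω ^ r) μ :=
    ((integrable_const 1).sub (hXi.const_mul u)).add (hXr.const_mul _)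
  calc mgf X μ (-u) ≤ ∫ ω, 1 - u * X ω + u ^ r * X ω ^ r ∂μ := by
        refine integral_mono (integrable_exp_neg_mul_of_nonneg hXm hX hu) hbound fun ω ↦ ?_
        have h := exp_neg_le_one_sub_add_rpow hr1 hr2 (mul_nonneg hu (hX ω))
        rwa [mul_rpow hu (hX ω), ← neg_mul] at h
    _ = 1 - u * μ[X] + u ^ r * μ[fun ω ↦ X ω ^ r] := by
        rw [integral_add (f := fun ω ↦ 1 - u * X ω) ((integrable_const 1).sub (hXi.const_mul u))
          (hXr.const_mul _), integral_sub (f := fun _ ↦ (1 : ℝ)) (integrable_const 1)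
          (hXi.const_mul u), integral_const_mul, integral_const_mul]
        simp

lemma exists_mgf_neg_le_exp_neg_mul {X : Ω → ℝ} (hXm : Measurable X) (hX : 0 ≤ X)
    (hXi : Integrable X μ) {r : ℝ} (hr1 : 1 < r) (hr2 : r ≤ 2)
    (hXr : Integrable (fun ω ↦ X ω ^ r) μ) {c : ℝ} (hc : c < μ[X]) :
    ∃ u > 0, mgf X μ (-u) ≤ exp (-(c * u)) := by
  have hsmall : ∀ᶠ u in 𝓝[>] (0 : ℝ), u ^ (r - 1) * μ[fun ω ↦ X ω ^ r] < μ[X] - c := by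
    refine Tendsto.eventually_lt_const (sub_pos.mpr hc) ?_
    have h := (((continuous_rpow_const (sub_nonneg.mpr hr1.le)).tendsto 0).mono_left
      (nhdsWithin_le_nhds (s := Set.Ioi 0))).mul_const (μ[fun ω ↦ X ω ^ r])
    simpa [zero_rpow (sub_pos.mpr hr1).ne'] using h
  obtain ⟨u, hu, hu0⟩ := (hsmall.and self_mem_nhdsWithin).exists
  refine ⟨u, hu0, ?_⟩
  have hur : u ^ r = u * u ^ (r - 1) := by
    rw [← rpow_one_add' hu0.le (by linarith)]; ring_nf
  calc mgf X μ (-u) ≤ 1 - u * μ[X] + u ^ r * μ[fun ω ↦ X ω ^ r] :=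
        mgf_neg_le_one_sub_add_rpow hXm hX hXi hr1.le hr2 hXr hu0.le
    _ ≤ 1 + -(c * u) := by rw [hur]; nlinarith
    _ ≤ exp (-(c * u)) := by linarith [add_one_le_exp (-(c * u))]

section IID

variable {X : ℕ → Ω → ℝ}

lemma self_div_sum_range_rpow_le_one (hX : ∀ i, 0 ≤ X i) {r : ℝ} (hr : 0 ≤ r) (n : ℕ) (ω : Ω) :
    (X 0 ω / ∑ i ∈ range n, X i ω) ^ r ≤ 1 := by
  rcases Nat.eq_zero_or_pos n with rfl | hn
  · simp [zero_rpow_le_one]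
  · have hsum : 0 ≤ ∑ i ∈ range n, X i ω := sum_nonneg fun i _ ↦ hX i ω
    exact rpow_le_one (div_nonneg (hX 0 ω) hsum) (div_le_one_of_le₀
      (single_le_sum (fun i _ ↦ hX i ω) (mem_range.mpr hn)) hsum) hr

lemma integrable_self_div_sum_range_rpow (hmeas : ∀ i, Measurable (X i)) (hX : ∀ i, 0 ≤ X i)
    {r : ℝ} (hr : 0 ≤ r) (n : ℕ) :
    Integrable (fun ω ↦ (X 0 ω / ∑ i ∈ range n, X i ω) ^ r) μ := by
  refine Integrable.mono' (integrable_const 1) ?_ (ae_of_all _ fun ω ↦ ?_)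
  · exact (((hmeas 0).div (Finset.measurable_sum _ fun i _ ↦ hmeas i)).pow_const
      r).aestronglyMeasurable
  · rw [norm_of_nonneg (rpow_nonneg (div_nonneg (hX 0 ω) (sum_nonneg fun i _ ↦ hX i ω)) r)]
    exact self_div_sum_range_rpow_le_one hX hr n ω

lemma measureReal_sum_le_le_exp_mul_mgf_pow (hmeas : ∀ i, Measurable (X i))
    (hindep : iIndepFun X μ) (hident : ∀ i, IdentDistrib (X i) (X 0) μ μ) (hX : ∀ i, 0 ≤ X i)
    (s : Finset ℕ) (a : ℝ) {u : ℝ} (hu : 0 ≤ u) :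
    μ.real {ω | ∑ i ∈ s, X i ω ≤ a} ≤ exp (u * a) * mgf (X 0) μ (-u) ^ #s := by
  have hsum : (fun ω ↦ ∑ i ∈ s, X i ω) = ∑ i ∈ s, X i := by ext ω; simp
  have h := measure_le_le_exp_mul_mgf a (neg_nonpos.mpr hu)
    (integrable_exp_neg_mul_of_nonneg (μ := μ) (Finset.measurable_sum s fun i _ ↦ hmeas i)
      (fun ω ↦ sum_nonneg fun i _ ↦ hX i ω) hu)
  rwa [neg_neg, hsum, hindep.mgf_sum hmeas,
    prod_congr rfl fun i _ ↦ mgf_congr_of_identDistrib _ _ (hident i) (-u), prod_const] at h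

lemma tendsto_rpow_mul_measureReal_sum_Ico_le_half (hmeas : ∀ i, Measurable (X i))
    (hindep : iIndepFun X μ) (hident : ∀ i, IdentDistrib (X i) (X 0) μ μ) (hX : ∀ i, 0 ≤ X i)
    (hXi : Integrable (X 0) μ) (hmean : μ[X 0] = 1) {q : ℝ} (hq1 : 1 < q) (hq2 : q ≤ 2)
    (hXq : Integrable (fun ω ↦ X 0 ω ^ q) μ) (r : ℝ) :
    Tendsto (fun n : ℕ ↦ (n : ℝ) ^ r * μ.real {ω | ∑ i ∈ Ico 1 n, X i ω ≤ n / 2}) atTop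
      (𝓝 0) := by
  obtain ⟨u, hu, hmgf⟩ := exists_mgf_neg_le_exp_neg_mul (hmeas 0) (hX 0) hXi hq1 hq2 hXq
    (show (3 / 4 : ℝ) < μ[X 0] by norm_num [hmean])
  have hdecay : Tendsto (fun n : ℕ ↦ exp (3 / 4 * u) * ((n : ℝ) ^ r * exp (-(u / 4) * n)))
      atTop (𝓝 0) := by
    simpa using ((tendsto_rpow_mul_exp_neg_mul_atTop_nhds_zero r (u / 4) (by positivity)).comp
      tendsto_natCast_atTop_atTop).const_mul (exp (3 / 4 * u))
  refine tendsto_of_tendsto_of_tendsto_of_le_of_le' tendsto_const_nhds hdecay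
    (Eventually.of_forall fun n ↦ by positivity) ?_
  filter_upwards [eventually_ge_atTop 1] with n hn
  calc (n : ℝ) ^ r * μ.real {ω | ∑ i ∈ Ico 1 n, X i ω ≤ n / 2}
      ≤ n ^ r * (exp (u * (n / 2)) * exp (-(3 / 4 * u)) ^ (n - 1)) := by
        gcongr
        refine (measureReal_sum_le_le_exp_mul_mgf_pow hmeas hindep hident hX _ _ hu.le).trans ?_
        rw [Nat.card_Ico]
        gcongr
        exact mgf_nonneg
    _ = exp (3 / 4 * u) * (n ^ r * exp (-(u / 4) * n)) := by
        rw [← exp_nat_mul, ← exp_add, Nat.cast_sub hn, mul_left_comm, ← exp_add]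
        ring_nf

lemma eventually_rpow_mul_integral_self_div_sum_range_le (hmeas : ∀ i, Measurable (X i))
    (hindep : iIndepFun X μ) (hident : ∀ i, IdentDistrib (X i) (X 0) μ μ) (hX : ∀ i, 0 ≤ X i)
    (hXi : Integrable (X 0) μ) (hmean : μ[X 0] = 1) {r : ℝ} (hr1 : 1 < r) (hr2 : r ≤ 2)
    (hXr : Integrable (fun ω ↦ X 0 ω ^ r) μ) :
    ∀ᶠ n : ℕ in atTop, (n : ℝ) ^ r * ∫ ω, (X 0 ω / ∑ i ∈ range n, X i ω) ^ r ∂μ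
      ≤ 1 + 2 ^ r * ∫ ω, X 0 ω ^ r ∂μ := by
  filter_upwards [(tendsto_rpow_mul_measureReal_sum_Ico_le_half hmeas hindep hident hX hXi hmean
    hr1 hr2 hXr r).eventually_lt_const one_pos, eventually_ge_atTop 1] with n htail hn
  set T : Ω → ℝ := fun ω ↦ ∑ i ∈ Ico 1 n, X i ω
  have hlow : MeasurableSet {ω | T ω ≤ n / 2} :=
    measurableSet_le (Finset.measurable_sum _ fun i _ ↦ hmeas i) measurable_const
  have hpoint : ∀ ω, (n : ℝ) ^ r * (X 0 ω / ∑ i ∈ range n, X i ω) ^ r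
      ≤ {ω | T ω ≤ n / 2}.indicator (fun _ ↦ (n : ℝ) ^ r) ω + 2 ^ r * X 0 ω ^ r := by
    intro ω
    simp only [Set.indicator_apply, Set.mem_ofPred_eq]
    refine rpow_mul_rpow_div_le (by positivity) (hX 0 ω)
      (single_le_sum (fun i _ ↦ hX i ω) (mem_range.mpr hn))
      (sum_le_sum_of_subset_of_nonneg (fun i hi ↦ mem_range.mpr (mem_Ico.mp hi).2)
        fun i _ _ ↦ hX i ω) (by linarith)
  calc (n : ℝ) ^ r * ∫ ω, (X 0 ω / ∑ i ∈ range n, X i ω) ^ r ∂μ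
      = ∫ ω, (n : ℝ) ^ r * (X 0 ω / ∑ i ∈ range n, X i ω) ^ r ∂μ :=
        (integral_const_mul _ _).symm
    _ ≤ ∫ ω, {ω | T ω ≤ n / 2}.indicator (fun _ ↦ (n : ℝ) ^ r) ω + 2 ^ r * X 0 ω ^ r ∂μ :=
        integral_mono ((integrable_self_div_sum_range_rpow hmeas hX (by linarith) n).const_mul _)
          (((integrable_const _).indicator hlow).add (hXr.const_mul _)) hpoint
    _ = (n : ℝ) ^ r * μ.real {ω | T ω ≤ n / 2} + 2 ^ r * ∫ ω, X 0 ω ^ r ∂μ := by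
        rw [integral_add ((integrable_const _).indicator hlow) (hXr.const_mul _),
          integral_indicator_const _ hlow, integral_const_mul, smul_eq_mul, mul_comm]
    _ ≤ 1 + 2 ^ r * ∫ ω, X 0 ω ^ r ∂μ := by linarith

theorem integral_rpow_le_liminf_rpow_mul_integral_self_div_sum_range
    (hmeas : ∀ i, Measurable (X i)) (hindep : iIndepFun X μ)
    (hident : ∀ i, IdentDistrib (X i) (X 0) μ μ) (hX : ∀ i, 0 ≤ X i) (hXi : Integrable (X 0) μ)
    (hmean : μ[X 0] = 1) {r : ℝ} (hr1 : 1 < r) (hr2 : r ≤ 2)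
    (hXr : Integrable (fun ω ↦ X 0 ω ^ r) μ) :
    ∫ ω, X 0 ω ^ r ∂μ
      ≤ liminf (fun n : ℕ ↦ (n : ℝ) ^ r * ∫ ω, (X 0 ω / ∑ i ∈ range n, X i ω) ^ r ∂μ) atTop := by
  simp_rw [← integral_const_mul]
  refine integral_le_liminf_integral_of_ae_tendsto (fun n ↦ ae_of_all _ fun ω ↦ ?_)
    (fun n ↦ (integrable_self_div_sum_range_rpow hmeas hX (by linarith) n).const_mul _)
    (ae_tendsto_rpow_mul_self_div_sum_range (fun i j hij ↦ hindep.indepFun hij) hident hX hXi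
      hmean (by linarith)) ?_
  · exact mul_nonneg (by positivity)
      (rpow_nonneg (div_nonneg (hX 0 ω) (sum_nonneg fun i _ ↦ hX i ω)) r)
  · simp_rw [integral_const_mul]
    exact ⟨_, eventually_map.mpr (eventually_rpow_mul_integral_self_div_sum_range_le hmeas hindep
      hident hX hXi hmean hr1 hr2 hXr)⟩

end IID

end

theorem stmt_14 {Ω : Type*} [MeasureSpace Ω] [IsProbabilityMeasure (ℙ : Measure Ω)]
    (Y : ℕ → Ω → ℝ)
    (hmeas : ∀ i, Measurable (Y i))
    (hindep : iIndepFun Y ℙ)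
    (hident : ∀ i, IdentDistrib (Y i) (Y 0) ℙ ℙ)
    (hvar : ∫ ω, (Y 0 ω) ^ 2 = 1)
    (p : ℝ) (hp : p ∈ Set.Ioc (2 : ℝ) 3)
    (hintp : Integrable (fun ω => |Y 0 ω| ^ p) ℙ) :
    ∫ ω, |Y 0 ω| ^ p ≤
      Filter.liminf (fun n : ℕ =>
        (n : ℝ) ^ (p / 2) *
          ∫ ω, ((Y 0 ω) ^ 2 / ∑ k ∈ Finset.range n, (Y k ω) ^ 2) ^ (p / 2)) atTop := by
  obtain ⟨hp2, hp3⟩ := hp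
  have hsq := integral_rpow_le_liminf_rpow_mul_integral_self_div_sum_range
    (X := fun k ω ↦ Y k ω ^ 2) (fun i ↦ (hmeas i).pow_const 2)
    (hindep.comp (fun _ y ↦ y ^ 2) fun _ ↦ measurable_id.pow_const 2)
    (fun i ↦ (hident i).comp (measurable_id.pow_const 2)) (fun i ω ↦ sq_nonneg _)
    (.of_integral_ne_zero (by simp [hvar])) hvar
    (r := p / 2) (by linarith) (by linarith) (by simpa only [sq_rpow_div_two] using hintp)
  simpa only [sq_rpow_div_two] using hsq
end
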